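/- arXiv:2502.03789 — 7 statements merged into one kernel-verified Lean document; each statement's English description precedes it below -/
import Mathlib

section
/- For every fair division instance with n agents and m goods in which each agent i has an additive valuation v_i, there exists an MMS multi-allocation A = (A_1,…,A_n) whose characteristic vector satisfies ‖χ^A‖_∞ ≤ 2 and ‖χ^A‖_1 ≤ 2m; that is, every agent i receives a bundle with v_i(A_i) ≥ μ_i, no single good is assigned to more than 2 agents, and the total number of goods assigned (counted with copies) is at most 2m. -/
/-!
Let `t i` be the maximin share of agent `i`; an optimal partition gives it `n` disjoint bundles
worth `t i` each. Serving agents first by single goods worth `t i` and then by inclusion-minimal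
bags (each worth less than `2 t j` to everyone still waiting) leaves at most half of the agents
unserved. Each of the `u ≤ n / 2` unserved agents merges its bundles in pairs into `u` bundles
worth `2 t i`; rerunning the procedure on all goods then serves every one of them, since a
bag now costs each waiting agent less than one of its bundles. Each round hands out disjoint
bundles, so the union of the two rounds uses every good at most twice.
-/

open Finset

/-- `X : Fin n → Finset α` is a partition of the (finite) ground set `α` into `n`
(possibly empty) pairwise disjoint parts whose union is everything. -/
def IsPartition {α : Type*} [DecidableEq α] [Fintype α] {n : ℕ}
    (X : Fin n → Finset α) : Prop :=
  (∀ i j : Fin n, i ≠ j → Disjoint (X i) (X j)) ∧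
    Finset.univ.biUnion X = Finset.univ

/-- The maximin share of an agent with valuation `v` among `n` agents. -/
noncomputable def mmsShare {m : ℕ} (n : ℕ) (v : Finset (Fin m) → NNReal) : NNReal :=
  sSup {x : NNReal | ∃ X : Fin n → Finset (Fin m), IsPartition X ∧ x = ⨅ j, v (X j)}

open Function

variable {ι α : Type*}

/-- Valuations are additive throughout, given by the weights `w` of the single goods. -/
def HasBundles (w : α → NNReal) (R : Finset α) (r : ℕ) (c : NNReal) : Prop :=
  ∃ X : Fin r → Finset α, Pairwise (Disjoint on X) ∧ ∀ k, X k ⊆ R ∧ c ≤ ∑ g ∈ X k, w g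

def IsPartialAllocation (R : Finset α) (A : ι → Finset α) : Prop :=
  (∀ i, A i ⊆ R) ∧ Pairwise (Disjoint on A)

theorem HasBundles.of_le {w : α → NNReal} {R : Finset α} {r r' : ℕ} {c : NNReal}
    (h : HasBundles w R r c) (hr : r' ≤ r) : HasBundles w R r' c := by
  obtain ⟨X, hdisj, hX⟩ := h
  exact ⟨X ∘ Fin.castLE hr, hdisj.comp_of_injective (Fin.castLE_injective hr), fun k => hX _⟩

theorem IsPartialAllocation.empty {R : Finset α} :
    IsPartialAllocation R fun _ : ι => (∅ : Finset α) :=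
  ⟨fun _ => empty_subset R, fun _ _ _ => disjoint_empty_left _⟩

variable [DecidableEq α]

namespace HasBundles

variable {w : α → NNReal} {R : Finset α} {r : ℕ} {c : NNReal}

/-- Removing one good destroys at most one bundle. -/
theorem sdiff_singleton (h : HasBundles w R (r + 1) c) (g : α) : HasBundles w (R \ {g}) r c := by
  obtain ⟨X, hdisj, hX⟩ := h
  obtain ⟨k₀, hk₀⟩ : ∃ k₀, ∀ k, g ∈ X k → k = k₀ := by
    by_cases hg : ∃ k, g ∈ X k
    · obtain ⟨k₀, hk₀⟩ := hg
      exact ⟨k₀, fun k hk => by_contra fun hne => disjoint_left.1 (hdisj hne) hk hk₀⟩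
    · exact ⟨0, fun k hk => absurd ⟨k, hk⟩ hg⟩
  refine ⟨X ∘ k₀.succAbove, hdisj.comp_of_injective Fin.succAbove_right_injective,
    fun k => ⟨fun a ha => ?_, (hX _).2⟩⟩
  rw [mem_sdiff, mem_singleton]
  exact ⟨(hX _).1 ha, by rintro rfl; exact Fin.succAbove_ne k₀ k (hk₀ _ ha)⟩

theorem group {u p : ℕ} (h : HasBundles w R (u * p) c) : HasBundles w R u (p • c) := by
  obtain ⟨X, hdisj, hX⟩ := h
  have hdisj' : Pairwise (Disjoint on fun kl : Fin u × Fin p => X (finProdFinEquiv kl)) :=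
    hdisj.comp_of_injective finProdFinEquiv.injective
  refine ⟨fun k => univ.biUnion fun l => X (finProdFinEquiv (k, l)), ?_, fun k => ⟨?_, ?_⟩⟩
  · intro k k' hkk'
    simp only [onFun, disjoint_biUnion_left, disjoint_biUnion_right]
    exact fun l _ l' _ => hdisj' (by simp [hkk'])
  · exact biUnion_subset.2 fun l _ => (hX _).1
  · dsimp only
    rw [sum_biUnion (t := fun l => X (finProdFinEquiv (k, l)))
      fun l _ l' _ hll' => hdisj' (by simpa using hll' : (k, l) ≠ (k, l'))]
    calc p • c = ∑ _l : Fin p, c := by simp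
      _ ≤ _ := sum_le_sum fun l _ => (hX _).2

theorem nsmul_le_sum (h : HasBundles w R r c) : r • c ≤ ∑ g ∈ R, w g := by
  obtain ⟨X, hdisj, hX⟩ := h
  calc r • c = ∑ _k : Fin r, c := by simp
    _ ≤ ∑ k, ∑ g ∈ X k, w g := sum_le_sum fun k _ => (hX k).2
    _ = ∑ g ∈ univ.biUnion X, w g := (sum_biUnion fun k _ l _ hkl => hdisj hkl).symm
    _ ≤ ∑ g ∈ R, w g := sum_le_sum_of_subset (biUnion_subset.2 fun k _ => (hX k).1)

end HasBundles

theorem exists_isPartition_mmsShare_le {m n : ℕ} (v : Finset (Fin m) → NNReal) (hn : 0 < n) :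
    ∃ X : Fin n → Finset (Fin m), IsPartition X ∧ ∀ j, mmsShare n v ≤ v (X j) := by
  set s := {x : NNReal | ∃ X : Fin n → Finset (Fin m), IsPartition X ∧ x = ⨅ j, v (X j)}
  have hne : s.Nonempty := by
    refine ⟨_, fun k => if k = ⟨0, hn⟩ then univ else ∅, ⟨fun k l hkl => ?_, ?_⟩, rfl⟩
    · by_cases hk : k = ⟨0, hn⟩
      · simp [hk, Ne.symm (hk ▸ hkl)]
      · simp [hk]
    · exact eq_univ_of_forall fun g => mem_biUnion.2 ⟨⟨0, hn⟩, mem_univ _, by simp⟩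
  have hfin : s.Finite := (Set.finite_range fun X : Fin n → Finset (Fin m) => ⨅ j, v (X j)).subset
    fun x ⟨X, _, hx⟩ => ⟨X, hx.symm⟩
  obtain ⟨X, hX, hval⟩ := hne.csSup_mem hfin
  exact ⟨X, hX, fun j => hval.trans_le (ciInf_le (OrderBot.bddBelow _) j)⟩

theorem hasBundles_mmsShare {m n : ℕ} {v : Finset (Fin m) → NNReal}
    (hv : ∀ S, v S = ∑ g ∈ S, v {g}) (hn : 0 < n) :
    HasBundles (fun g => v {g}) univ n (mmsShare n v) := by
  obtain ⟨X, ⟨hdisj, -⟩, hX⟩ := exists_isPartition_mmsShare_le v hn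
  exact ⟨X, fun k l hkl => hdisj k l hkl, fun k => ⟨subset_univ _, (hX k).trans_eq (hv _)⟩⟩

namespace IsPartialAllocation

variable {R B : Finset α} {A : ι → Finset α}

theorem update [DecidableEq ι] (hA : IsPartialAllocation (R \ B) A) (hB : B ⊆ R) (i : ι) :
    IsPartialAllocation R (update A i B) := by
  have hdisj : ∀ j, Disjoint B (A j) := fun j => disjoint_sdiff.mono_right (hA.1 j)
  refine ⟨fun j => ?_, fun j j' hjj' => ?_⟩
  · rcases eq_or_ne j i with rfl | hj
    · simpa using hB
    · simpa [hj] using (hA.1 j).trans sdiff_subset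
  · rcases eq_or_ne j i with rfl | hj
    · simpa [onFun, hjj'.symm] using hdisj j'
    rcases eq_or_ne j' i with rfl | hj'
    · simpa [onFun, hj] using (hdisj j).symm
    · simpa [onFun, hj, hj'] using hA.2 hjj'

theorem card_filter_mem_le_one [Fintype ι] (hA : IsPartialAllocation R A) (g : α) :
    #{i | g ∈ A i} ≤ 1 :=
  card_le_one.2 fun _ hi _ hj => by_contra fun hij =>
    disjoint_left.1 (hA.2 hij) (mem_filter.1 hi).2 (mem_filter.1 hj).2

end IsPartialAllocation

theorem sum_card_le_of_forall_card_filter_mem_le [Fintype ι] [Fintype α] (A : ι → Finset α)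
    {p : ℕ} (h : ∀ g, #{i | g ∈ A i} ≤ p) : ∑ i, #(A i) ≤ Fintype.card α * p :=
  calc ∑ i, #(A i) = ∑ g, #{i | g ∈ A i} := by
        simp only [card_filter]
        rw [sum_comm]
        simp
    _ ≤ ∑ _g : α, p := sum_le_sum fun g _ => h g
    _ = Fintype.card α * p := by simp

section BagFilling

variable (w : ι → α → NNReal) (t : ι → NNReal)

/-- A bag that is inclusion-minimal among those someone in `I` accepts loses its acceptance
when one good is removed, so it is worth less than two thresholds to everyone in `I`. -/
theorem exists_bag {I : Finset ι} {R : Finset α} (hsmall : ∀ i ∈ I, ∀ g ∈ R, w i g < t i)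
    (hbig : ∃ i ∈ I, t i ≤ ∑ g ∈ R, w i g) :
    ∃ B ⊆ R, ∃ i ∈ I, t i ≤ ∑ g ∈ B, w i g ∧ ∀ j ∈ I, ∑ g ∈ B, w j g ≤ 2 • t j := by
  set bags := R.powerset.filter fun B => ∃ i ∈ I, t i ≤ ∑ g ∈ B, w i g
  obtain ⟨B, hB, hmin⟩ := exists_min_image bags card ⟨R, by simpa [bags] using hbig⟩
  obtain ⟨hBR, i, hi, hiB⟩ : B ⊆ R ∧ ∃ i ∈ I, t i ≤ ∑ g ∈ B, w i g := by simpa [bags] using hB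
  refine ⟨B, hBR, i, hi, hiB, fun j hj => ?_⟩
  rcases B.eq_empty_or_nonempty with rfl | ⟨g, hg⟩
  · simp
  have herase : ∑ x ∈ B.erase g, w j x < t j := by
    by_contra! hle
    have := hmin (B.erase g) (by simpa [bags] using ⟨(erase_subset g B).trans hBR, j, hj, hle⟩)
    exact this.not_gt (card_erase_lt_of_mem hg)
  rw [← add_sum_erase B _ hg, two_nsmul]
  exact (add_lt_add (hsmall j hj g (hBR hg)) herase).le

variable [DecidableEq ι]

theorem exists_bagFilling (I : Finset ι) (R : Finset α)
    (hsmall : ∀ i ∈ I, ∀ g ∈ R, w i g < t i) :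
    ∃ (A : ι → Finset α) (S : Finset ι), S ⊆ I ∧ IsPartialAllocation R A ∧
      (∀ i ∈ S, t i ≤ ∑ g ∈ A i, w i g) ∧
      ∀ j ∈ I \ S, ∑ g ∈ R, w j g < (2 * #S + 1) • t j := by
  induction I using Finset.strongInduction generalizing R with
  | H I ih =>
  by_cases hbig : ∃ i ∈ I, t i ≤ ∑ g ∈ R, w i g
  swap
  · push Not at hbig
    exact ⟨fun _ => ∅, ∅, empty_subset I, .empty, by simp, by simpa using hbig⟩
  obtain ⟨B, hBR, i, hi, hiB, hB⟩ := exists_bag w t hsmall hbig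
  obtain ⟨A, S, hSI, hA, hS, hrest⟩ := ih (I.erase i) (erase_ssubset hi) (R \ B)
    fun j hj g hg => hsmall j (mem_of_mem_erase hj) g (mem_sdiff.1 hg).1
  have hiS : i ∉ S := fun h => notMem_erase i I (hSI h)
  refine ⟨update A i B, insert i S, insert_subset hi (hSI.trans (erase_subset i I)),
    hA.update hBR i, fun j hj => ?_, fun j hj => ?_⟩
  · rcases mem_insert.1 hj with rfl | hj
    · simpa using hiB
    · simpa [ne_of_mem_of_not_mem hj hiS] using hS j hj
  · obtain ⟨hjI, hjS⟩ := mem_sdiff.1 hj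
    have hji : j ≠ i := fun h => hjS (h ▸ mem_insert_self i S)
    have hj' : j ∈ I.erase i \ S := by simp_all
    rw [← sum_sdiff hBR, card_insert_of_notMem hiS,
      show 2 * (#S + 1) + 1 = (2 * #S + 1) + 2 by ring, add_nsmul]
    exact add_lt_add_of_lt_of_le (hrest j hj') (hB j hjI)

/-- While some agent values a single good at its threshold, it is served with that good,
which costs every other agent at most one of its bundles; `k ≤ 2` keeps the count invariant.
Afterwards bag filling serves agents until every bag left is worth less than `2 • t j`
to the unserved agents `j`, who own `#I` bundles worth `k • t j`. -/
theorem exists_allocation {k : ℕ} (hk : k ≤ 2) (I : Finset ι) (R : Finset α)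
    (hbundles : ∀ i ∈ I, HasBundles (w i) R #I (k • t i)) :
    ∃ (A : ι → Finset α) (S : Finset ι), S ⊆ I ∧ IsPartialAllocation R A ∧
      (∀ i ∈ S, t i ≤ ∑ g ∈ A i, w i g) ∧ (S = I ∨ k * #I ≤ 2 * #S) := by
  induction I using Finset.strongInduction generalizing R with
  | H I ih =>
  by_cases hbig : ∃ i ∈ I, ∃ g ∈ R, t i ≤ w i g
  · obtain ⟨i, hi, g, hg, hig⟩ := hbig
    have hcard : #I = #(I.erase i) + 1 := (card_erase_add_one hi).symm
    obtain ⟨A, S, hSI, hA, hS, hcardS⟩ := ih _ (erase_ssubset hi) (R \ {g}) fun j hj =>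
      (hcard ▸ hbundles j (mem_of_mem_erase hj)).sdiff_singleton g
    have hiS : i ∉ S := fun h => notMem_erase i I (hSI h)
    refine ⟨update A i {g}, insert i S, insert_subset hi (hSI.trans (erase_subset i I)),
      hA.update (singleton_subset_iff.2 hg) i, fun j hj => ?_, ?_⟩
    · rcases mem_insert.1 hj with rfl | hj
      · simpa using hig
      · simpa [ne_of_mem_of_not_mem hj hiS] using hS j hj
    · rcases hcardS with rfl | h
      · exact .inl (insert_erase hi)
      · right
        rw [card_insert_of_notMem hiS, hcard]
        linarith
  · push Not at hbig
    obtain ⟨A, S, hSI, hA, hS, hrest⟩ := exists_bagFilling w t I R hbig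
    refine ⟨A, S, hSI, hA, hS, or_iff_not_imp_left.2 fun hSI' => ?_⟩
    obtain ⟨j, hj⟩ : (I \ S).Nonempty := sdiff_nonempty.2 fun h => hSI' (hSI.antisymm h)
    have := (hbundles j (mem_sdiff.1 hj).1).nsmul_le_sum.trans_lt (hrest j hj)
    rw [smul_smul] at this
    have := (nsmul_left_monotone bot_le).reflect_lt this
    lia

end BagFilling

theorem mms_multiallocation_additive_goods_general
    (n m : ℕ)
    (v : Fin n → Finset (Fin m) → NNReal)
    (hadd : ∀ i, ∀ S : Finset (Fin m), v i S = ∑ g ∈ S, v i {g}) :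
    ∃ A : Fin n → Finset (Fin m),
      (∀ i, mmsShare n (v i) ≤ v i (A i)) ∧
      (∀ g : Fin m, (Finset.univ.filter (fun i => g ∈ A i)).card ≤ 2) ∧
      (∑ i, (A i).card ≤ 2 * m) := by
  set w : Fin n → Fin m → NNReal := fun i g => v i {g}
  set t : Fin n → NNReal := fun i => mmsShare n (v i)
  have hbundles (i : Fin n) : HasBundles (w i) univ n (t i) := hasBundles_mmsShare (hadd i) i.pos
  obtain ⟨A₁, S₁, -, hA₁, hS₁, hcard₁⟩ :=
    exists_allocation w t (k := 1) (by norm_num) univ univ (by simpa using hbundles)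
  set U := univ \ S₁
  have hU : #U * 2 ≤ n := by
    rw [card_univ_sdiff, Fintype.card_fin]
    rcases hcard₁ with rfl | h
    · simp
    · simp only [card_univ, Fintype.card_fin, one_mul] at h
      lia
  obtain ⟨A₂, S₂, hS₂U, hA₂, hS₂, hcard₂⟩ :=
    exists_allocation w t le_rfl U univ fun i _ => ((hbundles i).of_le hU).group
  have hS₂eq : S₂ = U := hcard₂.elim id fun h => eq_of_subset_of_card_le hS₂U (by lia)
  have hcount (g : Fin m) : #{i | g ∈ A₁ i ∪ A₂ i} ≤ 2 := by
    simp only [mem_union, filter_or]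
    exact (card_union_le _ _).trans
      (add_le_add (hA₁.card_filter_mem_le_one g) (hA₂.card_filter_mem_le_one g))
  refine ⟨fun i => A₁ i ∪ A₂ i, fun i => ?_, hcount, ?_⟩
  · rw [hadd]
    by_cases hi : i ∈ S₁
    · exact (hS₁ i hi).trans (sum_le_sum_of_subset subset_union_left)
    · exact (hS₂ i (hS₂eq ▸ mem_sdiff.2 ⟨mem_univ i, hi⟩)).trans
        (sum_le_sum_of_subset subset_union_right)
  · simpa [mul_comm] using sum_card_le_of_forall_card_filter_mem_le _ hcount

/-- for additive valuations, there is an MMS multi-allocation with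
`‖χ‖_∞ ≤ 2` and `‖χ‖_1 ≤ 2m`. -/
theorem mms_multiallocation_additive_goods
    (n m : ℕ) (hn : 0 < n) (hm : 0 < m)
    (v : Fin n → Finset (Fin m) → NNReal)
    (hadd : ∀ i, ∀ S : Finset (Fin m), v i S = ∑ g ∈ S, v i {g}) :
    ∃ A : Fin n → Finset (Fin m),
      (∀ i, mmsShare n (v i) ≤ v i (A i)) ∧
      (∀ g : Fin m, (Finset.univ.filter (fun i => g ∈ A i)).card ≤ 2) ∧
      (∑ i, (A i).card ≤ 2 * m) :=
  mms_multiallocation_additive_goods_general n m v hadd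
end

section
/- For every fair division instance with n agents and m chores in which each agent i has a monotone, normalized cost function c_i, there exists an MMS multi-allocation A = (A_1,…,A_n) in which at most m/e chores remain unassigned, i.e., ‖χ^A‖_z ≤ m/e (where e is Euler's number). -/
open Finset

/-- The maximin share of an agent with cost function `c` among `n` agents (chores):
the minimum, over all partitions of the chores into `n` parts, of the maximum
cost of a part. -/
noncomputable def mmsCost {m : ℕ} (n : ℕ) (c : Finset (Fin m) → NNReal) : NNReal :=
  sInf {x : NNReal | ∃ X : Fin n → Finset (Fin m), IsPartition X ∧ x = ⨆ j, c (X j)}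

/-- for monotone normalized costs, there is an MMS multi-allocation
of the chores in which at most `m / e` chores remain unassigned. -/
theorem mms_multiallocation_monotone_chores
    (n m : ℕ) (hn : 0 < n) (hm : 0 < m)
    (c : Fin n → Finset (Fin m) → NNReal)
    (hmono : ∀ i, ∀ S T : Finset (Fin m), S ⊆ T → c i S ≤ c i T)
    (hnorm : ∀ i, c i ∅ = 0) :
    ∃ A : Fin n → Finset (Fin m),
      (∀ i, c i (A i) ≤ mmsCost n (c i)) ∧
      ((Finset.univ.filter (fun a : Fin m => ∀ i, a ∉ A i)).card : ℝ)
        ≤ m / Real.exp 1 := by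
  classical
  -- Step 1: for each agent, an optimal MMS partition exists.
  have hattain : ∀ i, ∃ X : Fin n → Finset (Fin m),
      IsPartition X ∧ mmsCost n (c i) = ⨆ j, c i (X j) := by
    intro i
    set S : Set NNReal :=
      {x : NNReal | ∃ X : Fin n → Finset (Fin m), IsPartition X ∧ x = ⨆ j, c i (X j)} with hS
    have hne : S.Nonempty := by
      refine ⟨_, ⟨fun j => if j = ⟨0, hn⟩ then Finset.univ else ∅, ⟨?_, ?_⟩, rfl⟩⟩
      · intro a b hab
        by_cases ha : a = ⟨0, hn⟩
        · by_cases hb : b = ⟨0, hn⟩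
          · exact absurd (ha.trans hb.symm) hab
          · simp [ha, hb]
        · simp [ha]
      · apply Finset.eq_univ_of_forall
        intro a
        simp only [Finset.mem_biUnion]
        exact ⟨⟨0, hn⟩, Finset.mem_univ _, by simp⟩
    have hfin : S.Finite := by
      apply Set.Finite.subset (Set.finite_range
        (fun X : Fin n → Finset (Fin m) => ⨆ j, c i (X j)))
      rintro x ⟨X, _, rfl⟩
      exact ⟨X, rfl⟩
    have hmem : sInf S ∈ S := hne.csInf_mem hfin
    obtain ⟨X, hX, hXv⟩ := hmem
    exact ⟨X, hX, hXv⟩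
  choose X hXpart hXval using hattain
  -- part index of each chore in each agent's partition
  have hpart : ∀ i (a : Fin m), ∃ j, a ∈ X i j := by
    intro i a
    have := (hXpart i).2
    have ha : a ∈ Finset.univ.biUnion (X i) := this ▸ Finset.mem_univ a
    simpa using ha
  choose p hp using hpart
  have hmemiff : ∀ i (a : Fin m) (j : Fin n), a ∈ X i j ↔ j = p i a := by
    intro i a j
    constructor
    · intro haj
      by_contra hne
      have := ((hXpart i).1 j (p i a) hne).le_bot (Finset.mem_inter.2 ⟨haj, hp i a⟩)
      simpa using this
    · rintro rfl; exact hp i a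
  set N : (Fin n → Fin n) → ℕ :=
    fun f => (Finset.univ.filter (fun a : Fin m => ∀ i, a ∉ X i (f i))).card with hN
  -- counting: total over all choice functions
  have hsum : ∑ f : Fin n → Fin n, N f = m * (n - 1) ^ n := by
    have h1 : ∀ f, N f = ∑ a : Fin m, if (∀ i, a ∉ X i (f i)) then 1 else 0 := by
      intro f; rw [hN]; exact Finset.card_filter _ _
    calc ∑ f : Fin n → Fin n, N f
        = ∑ f : Fin n → Fin n, ∑ a : Fin m, if (∀ i, a ∉ X i (f i)) then 1 else 0 :=
          Finset.sum_congr rfl fun f _ => h1 f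
      _ = ∑ a : Fin m, ∑ f : Fin n → Fin n, if (∀ i, a ∉ X i (f i)) then 1 else 0 :=
          Finset.sum_comm
      _ = ∑ a : Fin m, ((Finset.univ.filter
            (fun f : Fin n → Fin n => ∀ i, a ∉ X i (f i))).card) :=
          Finset.sum_congr rfl fun a _ => (Finset.card_filter _ _).symm
      _ = ∑ _a : Fin m, (n - 1) ^ n := by
          apply Finset.sum_congr rfl
          intro a _
          have : (Finset.univ.filter (fun f : Fin n → Fin n => ∀ i, a ∉ X i (f i)))
              = Fintype.piFinset (fun i => Finset.univ.erase (p i a)) := by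
            ext f
            simp only [Finset.mem_filter, Finset.mem_univ, true_and,
              Fintype.mem_piFinset, Finset.mem_erase, and_true]
            constructor
            · intro h i he
              exact h i (he ▸ hp i a)
            · intro h i hmem2
              exact h i ((hmemiff i a (f i)).1 hmem2)
          rw [this, Fintype.card_piFinset]
          simp [Finset.card_erase_of_mem]
      _ = m * (n - 1) ^ n := by simp [mul_comm]
  -- the minimizer
  obtain ⟨f0, _, hf0⟩ := Finset.exists_min_image (Finset.univ : Finset (Fin n → Fin n)) N
    ⟨fun _ => ⟨0, hn⟩, Finset.mem_univ _⟩
  have hcard : (Finset.univ : Finset (Fin n → Fin n)).card = n ^ n := by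
    simp [Fintype.card_fun]
  have hmin : n ^ n * N f0 ≤ m * (n - 1) ^ n := by
    calc n ^ n * N f0 = (Finset.univ : Finset (Fin n → Fin n)).card • N f0 := by
          simp [hcard]
      _ ≤ ∑ f : Fin n → Fin n, N f :=
          Finset.card_nsmul_le_sum _ _ _ (fun f _ => hf0 f (Finset.mem_univ f))
      _ = m * (n - 1) ^ n := hsum
  refine ⟨fun i => X i (f0 i), ?_, ?_⟩
  · intro i
    rw [hXval i]
    exact le_ciSup (f := fun j => c i (X i j)) (Set.Finite.bddAbove (Set.finite_range _)) (f0 i)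
  · -- real analysis part
    have hn' : (0 : ℝ) < n := by exact_mod_cast hn
    have hNle : (N f0 : ℝ) ≤ m * (((n : ℝ) - 1) / n) ^ n := by
      have h1 : ((n : ℝ) ^ n) * (N f0 : ℝ) ≤ m * ((n : ℝ) - 1) ^ n := by
        have := hmin
        have hcast : ((n - 1 : ℕ) : ℝ) = (n : ℝ) - 1 := by
          rw [Nat.cast_sub hn]; simp
        calc ((n : ℝ) ^ n) * (N f0 : ℝ) = ((n ^ n * N f0 : ℕ) : ℝ) := by push_cast; ring
          _ ≤ ((m * (n - 1) ^ n : ℕ) : ℝ) := by exact_mod_cast hmin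
          _ = m * ((n : ℝ) - 1) ^ n := by push_cast [hcast]; ring
      have hpow : (0 : ℝ) < (n : ℝ) ^ n := pow_pos hn' n
      rw [div_pow, ← mul_div_assoc, le_div_iff₀ hpow]
      linarith [h1]
    have hfrac : (((n : ℝ) - 1) / n) ^ n ≤ Real.exp (-1) := by
      have h0 : (0 : ℝ) ≤ ((n : ℝ) - 1) / n := by
        apply div_nonneg _ hn'.le
        have : (1 : ℝ) ≤ n := by exact_mod_cast hn
        linarith
      have hle : ((n : ℝ) - 1) / n ≤ Real.exp (-(1 / n)) := by
        have := Real.add_one_le_exp (-(1 / (n : ℝ)))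
        have heq : ((n : ℝ) - 1) / n = -(1 / n) + 1 := by field_simp; ring
        rw [heq]; exact this
      calc (((n : ℝ) - 1) / n) ^ n ≤ (Real.exp (-(1 / n))) ^ n :=
            pow_le_pow_left₀ h0 hle n
        _ = Real.exp ((n : ℝ) * -(1 / n)) := by rw [← Real.exp_nat_mul]
        _ = Real.exp (-1) := by
            congr 1
            field_simp
    calc ((Finset.univ.filter (fun a : Fin m => ∀ i, a ∉ X i (f0 i))).card : ℝ)
        = (N f0 : ℝ) := by simp [hN]
      _ ≤ m * (((n : ℝ) - 1) / n) ^ n := hNle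
      _ ≤ m * Real.exp (-1) := by
          apply mul_le_mul_of_nonneg_left hfrac (by positivity)
      _ = m / Real.exp 1 := by rw [Real.exp_neg]; ring
end

section
/- For every δ > 0 there exist a number of agents n, a number of chores m, and monotone normalized cost functions c_1,…,c_n : 2^[m] → ℝ≥0 such that every MMS multi-allocation A of this instance leaves at least (1−δ)·m/e chores unassigned, i.e., ‖χ^A‖_z ≥ (1−δ)·m/e (where e is Euler's number). -/
/-!
Identify the `n ^ n` chores with the maps `f : Fin n → Fin n`, and let agent `i` pay `0` for a
bundle whose chores all share the same value `f i`, and `1` otherwise. Partitioning by the value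
of `f i` shows that every maximin share is `0`, so an MMS multi-allocation gives each agent `i`
chores with one common value `j i` at `i`. Every `f` with `f i ≠ j i` for all `i` stays
unassigned, which leaves at least `(n - 1) ^ n = (1 - 1/n) ^ n · n ^ n ≈ m / e` chores.
-/

open Finset

open Filter Real

section FiberCost

variable {α β : Type*} [DecidableEq β]

def fiberCost (p : α → β) (S : Finset α) : NNReal :=
  if #(S.image p) ≤ 1 then 0 else 1

lemma fiberCost_eq_zero_iff {p : α → β} {S : Finset α} :
    fiberCost p S = 0 ↔ #(S.image p) ≤ 1 := by
  unfold fiberCost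
  split_ifs with h <;> simp [h]

lemma fiberCost_mono (p : α → β) {S T : Finset α} (hST : S ⊆ T) :
    fiberCost p S ≤ fiberCost p T := by
  have := card_le_card (image_subset_image (f := p) hST)
  unfold fiberCost
  split_ifs <;> first | omega | simp

lemma fiberCost_empty (p : α → β) : fiberCost p ∅ = 0 := by
  simp [fiberCost]

lemma fiberCost_filter_eq [DecidableEq α] (p : α → β) (S : Finset α) (b : β) :
    fiberCost p (S.filter (p · = b)) = 0 :=
  fiberCost_eq_zero_iff.2 <| (card_le_card (t := {b}) fun _ hx => by
    obtain ⟨a, ha, rfl⟩ := mem_image.1 hx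
    exact mem_singleton.2 (mem_filter.1 ha).2).trans_eq (card_singleton b)

end FiberCost

lemma isPartition_fibers {α : Type*} [DecidableEq α] [Fintype α] {n : ℕ} (p : α → Fin n) :
    IsPartition fun j => univ.filter (p · = j) :=
  ⟨fun _ _ hij => disjoint_filter.2 fun _ _ h₁ h₂ => hij (h₁ ▸ h₂),
    eq_univ_of_forall fun a => mem_biUnion.2 ⟨p a, mem_univ _, by simp⟩⟩

lemma mmsCost_eq_zero_of_isPartition {m n : ℕ} {c : Finset (Fin m) → NNReal}
    {X : Fin n → Finset (Fin m)} (hX : IsPartition X) (hc : ∀ j, c (X j) = 0) :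
    mmsCost n c = 0 :=
  nonpos_iff_eq_zero.1 <|
    csInf_le_of_le (OrderBot.bddBelow _) ⟨X, hX, rfl⟩ (ciSup_le' fun j => (hc j).le)

lemma mmsCost_fiberCost {m n : ℕ} (p : Fin m → Fin n) : mmsCost n (fiberCost p) = 0 :=
  mmsCost_eq_zero_of_isPartition (isPartition_fibers p) fun j => fiberCost_filter_eq p _ j

/-- The points whose `i`-th coordinate avoids `(A i).image (e · i)` for every `i` form a product
of sets of size at least `card β - 1`, and none of them lies in any `A i`. -/
lemma sub_one_pow_card_le_card_filter_forall_notMem {ι β α : Type*} [Fintype ι] [DecidableEq ι]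
    [Fintype β] [DecidableEq β] [Fintype α] [DecidableEq α] (e : α ≃ (ι → β)) (A : ι → Finset α)
    (hA : ∀ i, #((A i).image fun a => e a i) ≤ 1) :
    (Fintype.card β - 1) ^ Fintype.card ι ≤ #(univ.filter fun a => ∀ i, a ∉ A i) := by
  let avoid : Finset α :=
    (Fintype.piFinset fun i => ((A i).image fun a => e a i)ᶜ).map e.symm.toEmbedding
  have havoid : avoid ⊆ univ.filter fun a => ∀ i, a ∉ A i := by
    intro a ha
    refine mem_filter.2 ⟨mem_univ a, fun i hai => ?_⟩
    simp only [avoid, mem_map_equiv, Equiv.symm_symm, Fintype.mem_piFinset, mem_compl] at ha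
    exact ha i (mem_image_of_mem _ hai)
  calc (Fintype.card β - 1) ^ Fintype.card ι
      = ∏ _i : ι, (Fintype.card β - 1) := by rw [prod_const, card_univ]
    _ ≤ ∏ i, #(((A i).image fun a => e a i)ᶜ) :=
        prod_le_prod' fun i _ => by rw [card_compl]; exact Nat.sub_le_sub_left (hA i) _
    _ = #avoid := by simp [avoid, Fintype.card_piFinset]
    _ ≤ _ := card_le_card havoid

lemma exists_mul_pow_le_sub_one_pow {x : ℝ} (hx : x < exp (-1)) :
    ∃ n : ℕ, 0 < n ∧ x * n ^ n ≤ ((n - 1 : ℕ) : ℝ) ^ n := by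
  obtain ⟨n, hxn, hn⟩ := (((tendsto_one_add_div_pow_exp (-1)).eventually
    (eventually_gt_nhds hx)).and (eventually_gt_atTop 0)).exists
  refine ⟨n, hn, ?_⟩
  have hn' : (0 : ℝ) < n := by exact_mod_cast hn
  calc x * n ^ n ≤ (1 + (-1) / n) ^ n * n ^ n := by gcongr
    _ = ((n - 1 : ℕ) : ℝ) ^ n := by
        rw [← mul_pow, Nat.cast_sub (by omega)]
        field_simp
        ring

/-- for every `δ > 0` there is a chores instance with monotone
normalized costs in which every MMS multi-allocation leaves at least
`(1 - δ) m / e` chores unassigned. -/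
theorem mms_chores_lower_bound (δ : ℝ) (hδ : 0 < δ) :
    ∃ (n m : ℕ) (c : Fin n → Finset (Fin m) → NNReal),
      0 < n ∧ 0 < m ∧
      (∀ i, ∀ S T : Finset (Fin m), S ⊆ T → c i S ≤ c i T) ∧
      (∀ i, c i ∅ = 0) ∧
      ∀ A : Fin n → Finset (Fin m),
        (∀ i, c i (A i) ≤ mmsCost n (c i)) →
        (1 - δ) * m / Real.exp 1
          ≤ ((Finset.univ.filter (fun a : Fin m => ∀ i, a ∉ A i)).card : ℝ) := by
  have hlt : (1 - δ) / exp 1 < exp (-1) := by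
    rw [exp_neg, ← one_div]
    exact div_lt_div_of_pos_right (by linarith) (exp_pos 1)
  obtain ⟨n, hn, hbound⟩ := exists_mul_pow_le_sub_one_pow hlt
  let e : Fin (n ^ n) ≃ (Fin n → Fin n) := finFunctionFinEquiv.symm
  refine ⟨n, n ^ n, fun i => fiberCost fun a => e a i, hn, by positivity,
    fun i _ _ => fiberCost_mono _, fun i => fiberCost_empty _, fun A hA => ?_⟩
  have hfiber : ∀ i, #((A i).image fun a => e a i) ≤ 1 := fun i =>
    fiberCost_eq_zero_iff.1 (le_zero_iff.1 ((hA i).trans_eq (mmsCost_fiberCost _)))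
  have hcount := sub_one_pow_card_le_card_filter_forall_notMem e A hfiber
  simp only [Fintype.card_fin] at hcount
  calc (1 - δ) * ((n ^ n : ℕ) : ℝ) / exp 1 = (1 - δ) / exp 1 * n ^ n := by push_cast; ring
    _ ≤ ((n - 1 : ℕ) : ℝ) ^ n := hbound
    -- `congr` identifies the decidability instance of the filter here with the lemma's
    _ ≤ _ := by exact_mod_cast hcount.trans_eq (by congr)
end

section
/- Fix for each agent i ∈ [n] a partition M^i = (M^i_1,…,M^i_n) of [m] into n parts, and assume m ≥ 4. For a uniformly random choice function σ ∈ [n]^[n], the probability that some good g ∈ [m] satisfies χ^{R^σ}_g ≥ 3·log m is at most 1/m²; equivalently, the number of choice functions σ for which max_{g∈[m]} |{i : g ∈ M^i_{σ(i)}}| ≥ 3 log m is at most n^n/m². -/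
/-!
Put `t = ⌈3 log m⌉` and take a union bound over the goods `g` and over the `t`-sets `T` of
agents. Since each `M i` is a partition, `g ∈ M i (σ i)` for all `i ∈ T` pins down `σ` on `T`,
so at most `n ^ (n - t)` choice functions qualify. Hence the count is at most
`m · C(n, t) · n ^ (n - t) ≤ m · n ^ n / t!`, and `t! ≥ 2 ^ t ≥ m ^ 3`.
-/

open Finset

open scoped Nat

section ChoiceFunctions

variable {ι κ : Type*} [Fintype ι] [DecidableEq ι] [Fintype κ]
  (p : ι → κ → Prop) [∀ i, DecidablePred (p i)]

theorem card_filter_forall_mem_le_pow (hp : ∀ i, #{a | p i a} ≤ 1) (T : Finset ι) :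
    #{σ : ι → κ | ∀ i ∈ T, p i (σ i)} ≤ Fintype.card κ ^ (Fintype.card ι - #T) := by
  let S : ∀ i, Finset κ := fun i => if i ∈ T then ({a | p i a} : Finset κ) else univ
  have hsub : ({σ : ι → κ | ∀ i ∈ T, p i (σ i)} : Finset _) ⊆ Fintype.piFinset S := by
    intro σ hσ
    simp only [mem_filter, mem_univ, true_and] at hσ
    simp only [Fintype.mem_piFinset, S]
    intro i
    split_ifs with hi
    · simpa using hσ i hi
    · exact mem_univ _
  calc _ ≤ #(Fintype.piFinset S) := card_le_card hsub
    _ = ∏ i, #(S i) := Fintype.card_piFinset S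
    _ ≤ ∏ i, if i ∈ T then 1 else Fintype.card κ := by
        gcongr with i
        simp only [S]
        split_ifs
        · exact hp i
        · exact card_univ.le
    _ = Fintype.card κ ^ (Fintype.card ι - #T) := by
        rw [prod_ite, prod_const_one, one_mul, prod_const, filter_not, filter_mem_eq_inter,
          univ_inter, card_sdiff_of_subset T.subset_univ, card_univ]

theorem card_filter_le_card_filter_apply_le_choose_mul_pow [DecidableEq κ]
    (hp : ∀ i, #{a | p i a} ≤ 1) (t : ℕ) :
    #{σ : ι → κ | t ≤ #{i | p i (σ i)}}
      ≤ (Fintype.card ι).choose t * Fintype.card κ ^ (Fintype.card ι - t) := by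
  have hsub : ({σ : ι → κ | t ≤ #{i | p i (σ i)}} : Finset _)
      ⊆ (powersetCard t univ).biUnion
          fun T => ({σ : ι → κ | ∀ i ∈ T, p i (σ i)} : Finset _) := by
    intro σ hσ
    obtain ⟨T, hT, hTcard⟩ := exists_subset_card_eq (mem_filter.1 hσ).2
    refine mem_biUnion.2 ⟨T, mem_powersetCard.2 ⟨T.subset_univ, hTcard⟩, ?_⟩
    simp only [mem_filter, mem_univ, true_and]
    exact fun i hi => (mem_filter.1 (hT hi)).2
  calc _ ≤ _ := card_le_card hsub
    _ ≤ #(powersetCard t (univ : Finset ι)) * Fintype.card κ ^ (Fintype.card ι - t) :=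
        card_biUnion_le_card_mul _ _ _ fun T hT =>
          (mem_powersetCard.1 hT).2 ▸ card_filter_forall_mem_le_pow p hp T
    _ = _ := by rw [card_powersetCard, card_univ]

end ChoiceFunctions

theorem Nat.factorial_mul_choose_mul_pow_sub_le (n t : ℕ) :
    t ! * n.choose t * n ^ (n - t) ≤ n ^ n := by
  rcases le_or_gt t n with htn | htn
  · calc t ! * n.choose t * n ^ (n - t) = n.descFactorial t * n ^ (n - t) := by
          rw [Nat.descFactorial_eq_factorial_mul_choose]
      _ ≤ n ^ t * n ^ (n - t) := Nat.mul_le_mul_right _ (Nat.descFactorial_le_pow n t)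
      _ = n ^ n := by rw [← pow_add, Nat.add_sub_cancel' htn]
  · simp [Nat.choose_eq_zero_of_lt htn]

theorem Nat.two_pow_le_factorial {t : ℕ} (ht : 4 ≤ t) : 2 ^ t ≤ t ! := by
  obtain ⟨k, rfl⟩ := Nat.exists_eq_add_of_le ht
  calc 2 ^ (4 + k) = 16 * 2 ^ k := by ring
    _ ≤ 4 ! * (4 + 1) ^ k := Nat.mul_le_mul (by decide) (Nat.pow_le_pow_left (by norm_num) k)
    _ ≤ (4 + k)! := Nat.factorial_mul_pow_le_factorial

theorem Real.le_pow_ceil_logb {b x : ℝ} (hb : 1 < b) (hx : 0 < x) : x ≤ b ^ ⌈logb b x⌉₊ := by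
  calc x = b ^ logb b x := (rpow_logb (by linarith) hb.ne' hx).symm
    _ ≤ b ^ (⌈logb b x⌉₊ : ℝ) := rpow_le_rpow_of_exponent_le hb.le (Nat.le_ceil _)
    _ = b ^ ⌈logb b x⌉₊ := rpow_natCast b _

theorem pow_three_le_factorial_ceil_logb {m : ℕ} (hm : 4 ≤ m) :
    m ^ 3 ≤ (⌈3 * Real.logb 2 m⌉₊)! := by
  have hm0 : (0 : ℝ) < m := by positivity
  have hpow : m ^ 3 ≤ 2 ^ ⌈3 * Real.logb 2 m⌉₊ := by
    have hlogb : 3 * Real.logb 2 m = Real.logb 2 ((m : ℝ) ^ 3) := by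
      rw [Real.logb_pow]
      push_cast
      ring
    rw [hlogb]
    exact_mod_cast Real.le_pow_ceil_logb one_lt_two (pow_pos hm0 3)
  have hlog : (2 : ℝ) ≤ Real.logb 2 m := by
    rw [Real.le_logb_iff_rpow_le one_lt_two hm0]
    norm_num
    exact_mod_cast hm
  exact hpow.trans (Nat.two_pow_le_factorial (Nat.lt_ceil.mpr (by push_cast; linarith)))

theorem linfty_chernoff_bound_general
    (n m : ℕ) (hm : 4 ≤ m)
    (M : Fin n → Fin n → Finset (Fin m))
    (hM : ∀ i, IsPartition (M i)) :
    (Nat.card {σ : Fin n → Fin n //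
        ∃ g : Fin m,
          3 * Real.logb 2 m
            ≤ ((Finset.univ.filter (fun i => g ∈ M i (σ i))).card : ℝ)} : ℝ)
      ≤ (n : ℝ) ^ n / (m : ℝ) ^ 2 := by
  classical
  set t := ⌈3 * Real.logb 2 m⌉₊
  have hunique (g : Fin m) (i : Fin n) : #{a | g ∈ M i a} ≤ 1 :=
    card_le_one.2 fun a ha b hb => by_contra fun hab =>
      disjoint_left.1 ((hM i).1 a b hab) (mem_filter.1 ha).2 (mem_filter.1 hb).2
  have hcount : #({σ : Fin n → Fin n | ∃ g : Fin m, 3 * Real.logb 2 m ≤ #{i | g ∈ M i (σ i)}}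
      : Finset _) ≤ m * (n.choose t * n ^ (n - t)) :=
    calc _ ≤ #(univ.biUnion fun g : Fin m =>
            ({σ | t ≤ #{i | g ∈ M i (σ i)}} : Finset (Fin n → Fin n))) := by
          refine card_le_card fun σ hσ => ?_
          obtain ⟨g, hg⟩ := (mem_filter.1 hσ).2
          exact mem_biUnion.2 ⟨g, mem_univ g, mem_filter.2 ⟨mem_univ σ, Nat.ceil_le.2 hg⟩⟩
      _ ≤ _ := by
          simpa using card_biUnion_le_card_mul univ _ _ fun g _ =>
            card_filter_le_card_filter_apply_le_choose_mul_pow _ (hunique g) t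
  rw [Nat.card_eq_fintype_card, Fintype.card_subtype, le_div_iff₀ (by positivity)]
  exact_mod_cast calc
    _ ≤ m ^ 3 * n.choose t * n ^ (n - t) := by nlinarith [hcount]
    _ ≤ t ! * n.choose t * n ^ (n - t) := by gcongr; exact pow_three_le_factorial_ceil_logb hm
    _ ≤ n ^ n := Nat.factorial_mul_choose_mul_pow_sub_le n t

/-- with `m ≥ 4`, for a uniformly random choice function
`σ ∈ [n]^[n]` the probability that some good has multiplicity at least `3 log m`
is at most `1/m²`; equivalently, the number of choice functions `σ` for which
`max_g |{i : g ∈ M i (σ i)}| ≥ 3 log m` is at most `n^n / m²`. -/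
theorem linfty_chernoff_bound
    (n m : ℕ) (hn : 0 < n) (hm : 4 ≤ m)
    (M : Fin n → Fin n → Finset (Fin m))
    (hM : ∀ i, IsPartition (M i)) :
    (Nat.card {σ : Fin n → Fin n //
        ∃ g : Fin m,
          3 * Real.logb 2 m
            ≤ ((Finset.univ.filter (fun i => g ∈ M i (σ i))).card : ℝ)} : ℝ)
      ≤ (n : ℝ) ^ n / (m : ℝ) ^ 2 :=
  linfty_chernoff_bound_general n m hm M hM
end

section
/- Fix for each agent i ∈ [n] a partition M^i = (M^i_1,…,M^i_n) of [m] indexed so that |M^i_1| ≤ … ≤ |M^i_n|, and let s_i be the largest index with |M^i_{s_i}| ≤ 2m/n (so s_i ≥ n/2). If σ is drawn by choosing each σ(i) independently and uniformly from {1,…,s_i}, then the probability that Σ_{i∈[n]} |M^i_{σ(i)}| exceeds m + 6·m·√(log m)/√n is at most 2/m³. -/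
/-!
Chernoff's method. Since the parts of each partition are sorted by size, the parts with index
at most `s i` are the smallest ones, so their average size is at most the overall average `m / n`,
and each is at most `c = 2m/n`. Convexity of `exp` on `[0, c]` then bounds the exponential moment
of agent `i`'s contribution by `exp ((exp u - 1) / 2)` (with rate `u / c`), and independence turns
the moments into a product. With `L = log₂ m`, Markov's inequality at `u = 3 √(L / n)` gives the
tail bound `exp (-(9/2) L) ≤ 2 / m³` once `n ≥ 9 L`; for smaller `n` the threshold exceeds `2m`,
which no admissible sum can reach.
-/

open Finset

open Real

lemma IsPartition.sum_card {α : Type*} [DecidableEq α] [Fintype α] {n : ℕ}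
    {X : Fin n → Finset α} (hX : IsPartition X) : ∑ j, #(X j) = Fintype.card α := by
  rw [← card_biUnion fun a _ b _ hab => hX.1 a b hab, hX.2, card_univ]

lemma exp_mul_le_one_add_mul {θ : ℝ} (h0 : 0 ≤ θ) (h1 : θ ≤ 1) (u : ℝ) :
    exp (θ * u) ≤ 1 + θ * (exp u - 1) := by
  have := convexOn_exp.2 (Set.mem_univ u) (Set.mem_univ 0) h0 (sub_nonneg.2 h1)
    (add_sub_cancel θ 1)
  simp only [smul_eq_mul, mul_zero, add_zero, exp_zero, mul_one] at this
  linarith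

/-- Chebyshev's sum inequality against the indicator of `Iic t`. -/
lemma Monotone.card_mul_sum_Iic_le {ι : Type*} [Fintype ι] [LinearOrder ι]
    [LocallyFiniteOrderBot ι] {x : ι → ℝ} (hx : Monotone x) (t : ι) :
    Fintype.card ι * ∑ j ∈ Iic t, x j ≤ #(Iic t) * ∑ j, x j := by
  have hind : Antitone fun j => if j ≤ t then (1 : ℝ) else 0 := by
    intro a b hab
    dsimp only
    split_ifs with hb ha <;> first | exact absurd (hab.trans hb) ha | norm_num
  have := (hind.antivary hx).card_mul_sum_le_sum_mul_sum
  simpa [ite_mul, sum_ite, filter_ge_eq_Iic] using this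

lemma Monotone.sum_Iic_exp_mul_le {ι : Type*} [Fintype ι] [LinearOrder ι]
    [LocallyFiniteOrderBot ι] {x : ι → ℝ} (hx : Monotone x) (hx0 : ∀ j, 0 ≤ x j) {c u : ℝ}
    (hc : 0 < c) (hu : 0 ≤ u) {t : ι} (ht : x t ≤ c) (hsum : ∑ j, x j ≤ Fintype.card ι * c / 2) :
    ∑ j ∈ Iic t, exp (u / c * x j) ≤ #(Iic t) * exp ((exp u - 1) / 2) := by
  have hcard : (0 : ℝ) < Fintype.card ι := by exact_mod_cast Fintype.card_pos_iff.2 ⟨t⟩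
  have hmean : (∑ j ∈ Iic t, x j) / c ≤ #(Iic t) / 2 := by
    rw [div_le_iff₀ hc, ← mul_le_mul_iff_of_pos_left hcard]
    calc Fintype.card ι * ∑ j ∈ Iic t, x j ≤ #(Iic t) * ∑ j, x j := hx.card_mul_sum_Iic_le t
      _ ≤ #(Iic t) * (Fintype.card ι * c / 2) := by gcongr
      _ = Fintype.card ι * (#(Iic t) / 2 * c) := by ring
  have hE : 0 ≤ exp u - 1 := by linarith [one_le_exp hu]
  calc ∑ j ∈ Iic t, exp (u / c * x j)
      ≤ ∑ j ∈ Iic t, (1 + x j / c * (exp u - 1)) := by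
        refine sum_le_sum fun j hj => ?_
        rw [div_mul_eq_mul_div, mul_comm u, mul_div_right_comm]
        exact exp_mul_le_one_add_mul (div_nonneg (hx0 j) hc.le)
          ((div_le_one hc).2 ((hx (mem_Iic.1 hj)).trans ht)) u
    _ = #(Iic t) + (∑ j ∈ Iic t, x j) / c * (exp u - 1) := by
        rw [sum_add_distrib, sum_const, nsmul_one, sum_div, sum_mul]
    _ ≤ #(Iic t) + #(Iic t) / 2 * (exp u - 1) := by gcongr
    _ = #(Iic t) * ((exp u - 1) / 2 + 1) := by ring
    _ ≤ #(Iic t) * exp ((exp u - 1) / 2) := by gcongr; exact add_one_le_exp _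

lemma card_filter_lt_sum_le_exp_mul_prod {ι : Type*} [Fintype ι] [DecidableEq ι]
    {κ : ι → Type*} [∀ i, DecidableEq (κ i)] (S : ∀ i, Finset (κ i)) (f : ∀ i, κ i → ℝ)
    {lam : ℝ} (hlam : 0 ≤ lam) (T : ℝ) :
    (#{σ ∈ Fintype.piFinset S | T < ∑ i, f i (σ i)} : ℝ)
      ≤ exp (-(lam * T)) * ∏ i, ∑ j ∈ S i, exp (lam * f i j) := by
  rw [prod_univ_sum, mul_sum, card_filter, Nat.cast_sum]
  refine sum_le_sum fun σ _ => ?_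
  rw [← exp_sum, ← exp_add, ← mul_sum]
  split_ifs with h
  · have := mul_le_mul_of_nonneg_left h.le hlam
    exact_mod_cast one_le_exp (by linarith)
  · exact_mod_cast (exp_pos _).le

lemma card_filter_lt_sum_eq_zero_of_le {ι : Type*} [Fintype ι] [DecidableEq ι]
    {κ : ι → Type*} [∀ i, DecidableEq (κ i)] {S : ∀ i, Finset (κ i)} {f : ∀ i, κ i → ℝ}
    {b T : ℝ} (hf : ∀ i, ∀ j ∈ S i, f i j ≤ b) (hT : Fintype.card ι * b ≤ T) :
    #{σ ∈ Fintype.piFinset S | T < ∑ i, f i (σ i)} = 0 := by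
  refine card_eq_zero.2 (filter_eq_empty_iff.2 fun σ hσ => not_lt.2 ?_)
  calc ∑ i, f i (σ i) ≤ ∑ _i : ι, b := sum_le_sum fun i _ => hf i _ (Fintype.mem_piFinset.1 hσ i)
    _ ≤ T := by rwa [sum_const, card_univ, nsmul_eq_mul]

lemma card_filter_lt_sum_le_of_monotone {ι κ : Type*} [Fintype ι] [DecidableEq ι] [Fintype κ]
    [LinearOrder κ] [LocallyFiniteOrderBot κ] {a : ι → κ → ℝ} (ha : ∀ i, Monotone (a i))
    (ha0 : ∀ i j, 0 ≤ a i j) {c u : ℝ} (hc : 0 < c) (hu : 0 ≤ u)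
    (hsum : ∀ i, ∑ j, a i j ≤ Fintype.card κ * c / 2) {s : ι → κ} (hs : ∀ i, a i (s i) ≤ c)
    (T : ℝ) :
    (#{σ ∈ Fintype.piFinset fun i => Iic (s i) | T < ∑ i, a i (σ i)} : ℝ)
      ≤ exp (Fintype.card ι * (exp u - 1) / 2 - u / c * T) * ∏ i, (#(Iic (s i)) : ℝ) := by
  calc _ ≤ exp (-(u / c * T)) * ∏ i, ∑ j ∈ Iic (s i), exp (u / c * a i j) :=
        card_filter_lt_sum_le_exp_mul_prod _ _ (by positivity) T
    _ ≤ exp (-(u / c * T)) * ∏ i, (#(Iic (s i)) * exp ((exp u - 1) / 2)) := by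
        gcongr with i
        exact (ha i).sum_Iic_exp_mul_le (ha0 i) hc hu (hs i) (hsum i)
    _ = _ := by
        rw [prod_mul_distrib, prod_const, card_univ, ← exp_nat_mul, mul_left_comm, ← exp_add,
          mul_comm]
        ring_nf

lemma natCard_forall_le_and_eq_card_filter_piFinset {ι β : Type*} [Fintype ι] [DecidableEq ι]
    [LinearOrder β] [LocallyFiniteOrderBot β] (s : ι → β) (P : (ι → β) → Prop)
    [DecidablePred P] :
    Nat.card {σ : ι → β // (∀ i, σ i ≤ s i) ∧ P σ}
      = #{σ ∈ Fintype.piFinset fun i => Iic (s i) | P σ} := by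
  rw [← Nat.card_eq_finsetCard]
  congr
  ext σ
  simp

lemma two_mul_le_add_mul_sqrt_div {m n L : ℝ} (hm : 0 ≤ m) (hn : 0 < n) (h : n ≤ 36 * L) :
    2 * m ≤ m + 6 * m * √L / √n := by
  have hsn : 0 < √n := sqrt_pos.2 hn
  have hsqrt : √n ≤ 6 * √L := by
    calc √n ≤ √(6 ^ 2 * L) := sqrt_le_sqrt (by linarith)
      _ = 6 * √L := by rw [sqrt_mul (by norm_num), sqrt_sq (by norm_num)]
  have hm_le : m ≤ 6 * m * √L / √n := by
    rw [le_div_iff₀ hsn]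
    nlinarith [mul_le_mul_of_nonneg_left hsqrt hm]
  linarith

/-- `u = 3 √(L / n)` minimises `n u² / 2 - 3 u √(n L)`, the exponent left after
`exp u - 1 ≤ u + u²`, which holds for `u ≤ 1`, i.e. for `9 L ≤ n`. -/
lemma chernoff_exponent_le {n m L : ℝ} (hn : 0 < n) (hm : 0 < m) (hL : 0 ≤ L)
    (h9 : 9 * L ≤ n) :
    n * (exp (3 * √L / √n) - 1) / 2 - 3 * √L / √n / (2 * m / n) * (m + 6 * m * √L / √n)
      ≤ -(9 / 2) * L := by
  set u := 3 * √L / √n with hu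
  have hsn : 0 < √n := sqrt_pos.2 hn
  have hu1 : u ≤ 1 := by
    rw [hu, div_le_one hsn]
    calc 3 * √L = √(3 ^ 2 * L) := by rw [sqrt_mul (by norm_num), sqrt_sq (by norm_num)]
      _ ≤ √n := sqrt_le_sqrt (by linarith)
  have hexp : exp u - 1 ≤ u + u ^ 2 := by
    have := abs_exp_sub_one_sub_id_le (abs_le.2 ⟨by linarith [show 0 ≤ u by positivity], hu1⟩)
    linarith [le_abs_self (exp u - 1 - u)]
  have hnu : n * u ^ 2 = 9 * L := by
    rw [hu, div_pow, mul_pow, sq_sqrt hL, sq_sqrt hn.le]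
    field_simp
    ring
  have hlin : u / (2 * m / n) * (m + 6 * m * √L / √n) = n * u / 2 + n * u ^ 2 := by
    rw [hu]
    field_simp
    ring
  rw [hlin]
  linarith [mul_le_mul_of_nonneg_left hexp hn.le]

lemma exp_neg_logb_two_le_two_div_cube {x : ℝ} (hx : 1 ≤ x) :
    exp (-(9 / 2) * logb 2 x) ≤ 2 / x ^ 3 := by
  have hL : 0 ≤ logb 2 x := logb_nonneg one_lt_two hx
  have hx_le : x ≤ exp (logb 2 x) := by
    calc x = exp (log 2 * logb 2 x) := by
          rw [mul_comm, ← log_rpow two_pos, rpow_logb two_pos (by norm_num) (by linarith),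
            exp_log (by linarith)]
      _ ≤ exp (logb 2 x) := by
          gcongr
          nlinarith [log_two_lt_d9]
  rw [le_div_iff₀ (by positivity)]
  calc exp (-(9 / 2) * logb 2 x) * x ^ 3 ≤ exp (-(9 / 2) * logb 2 x) * exp (logb 2 x) ^ 3 := by
        gcongr
    _ = exp (-(3 / 2) * logb 2 x) := by
        rw [← exp_nat_mul, ← exp_add]
        congr 1
        push_cast
        ring
    _ ≤ 2 := by linarith [exp_le_one_iff.2 (by linarith : -(3 / 2) * logb 2 x ≤ 0)]

theorem l1_hoeffding_truncated_bound_general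
    (n m : ℕ) (hn : 0 < n) (hm : 0 < m)
    (M : Fin n → Fin n → Finset (Fin m))
    (hM : ∀ i, IsPartition (M i))
    (hsorted : ∀ i, ∀ j k : Fin n, j ≤ k → (M i j).card ≤ (M i k).card)
    (s : Fin n → Fin n)
    (hsle : ∀ i, ((M i (s i)).card : ℝ) ≤ 2 * m / n) :
    (Nat.card {σ : Fin n → Fin n //
        (∀ i, σ i ≤ s i) ∧
        (m : ℝ) + 6 * m * Real.sqrt (Real.logb 2 m) / Real.sqrt n
          < ∑ i, ((M i (σ i)).card : ℝ)} : ℝ)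
      ≤ (2 / (m : ℝ) ^ 3) * ∏ i, (((s i : ℕ) : ℝ) + 1) := by
  classical
  set L := logb 2 (m : ℝ)
  have hn' : (0 : ℝ) < n := by exact_mod_cast hn
  have hm' : (1 : ℝ) ≤ m := by exact_mod_cast hm
  have hmono : ∀ i, Monotone fun j => ((M i j).card : ℝ) :=
    fun i j k hjk => Nat.cast_le.2 (hsorted i j k hjk)
  rw [natCard_forall_le_and_eq_card_filter_piFinset]
  rcases lt_or_ge (n : ℝ) (9 * L) with hsmall | hlarge
  · rw [card_filter_lt_sum_eq_zero_of_le (fun i j hj => (hmono i (mem_Iic.1 hj)).trans (hsle i))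
      (by rw [Fintype.card_fin, mul_div_cancel₀ _ hn'.ne']
          exact two_mul_le_add_mul_sqrt_div (by positivity) hn' (by linarith)), Nat.cast_zero]
    positivity
  · have htot : ∀ i, ∑ j, ((M i j).card : ℝ) ≤ Fintype.card (Fin n) * (2 * m / n) / 2 := by
      intro i
      rw [Fintype.card_fin, mul_div_cancel₀ _ hn'.ne', mul_div_cancel_left₀ _ two_ne_zero]
      exact_mod_cast ((hM i).sum_card.trans (Fintype.card_fin m)).le
    calc _ ≤ _ := card_filter_lt_sum_le_of_monotone hmono (fun _ _ => Nat.cast_nonneg _)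
          (by positivity) (by positivity : 0 ≤ 3 * √L / √n) htot hsle _
      _ ≤ exp (-(9 / 2) * L) * ∏ i, ((s i : ℕ) + 1 : ℝ) := by
          simp only [Fintype.card_fin, Fin.card_Iic, Nat.cast_add_one]
          gcongr
          exact chernoff_exponent_le hn' (by positivity) (logb_nonneg one_lt_two hm') hlarge
      _ ≤ _ := by
          gcongr
          exact exp_neg_logb_two_le_two_div_cube hm'

/-- each agent `i` has a partition `M i` of the goods with parts in
nondecreasing order of size, and `s i` is the largest index whose part has size at
most `2m/n`.  If each `σ i` is chosen independently and uniformly among the indices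
`≤ s i`, then the probability that `Σ_i |M i (σ i)|` exceeds
`m + 6 m √(log m) / √n` is at most `2/m³`.  (Stated via counting: the number of
such choice functions is at most `(2/m³) · Π_i (s i + 1)`.) -/
theorem l1_hoeffding_truncated_bound
    (n m : ℕ) (hn : 0 < n) (hm : 0 < m)
    (M : Fin n → Fin n → Finset (Fin m))
    (hM : ∀ i, IsPartition (M i))
    (hsorted : ∀ i, ∀ j k : Fin n, j ≤ k → (M i j).card ≤ (M i k).card)
    (s : Fin n → Fin n)
    (hsle : ∀ i, ((M i (s i)).card : ℝ) ≤ 2 * m / n)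
    (hsmax : ∀ i, ∀ j : Fin n, ((M i j).card : ℝ) ≤ 2 * m / n → j ≤ s i) :
    (Nat.card {σ : Fin n → Fin n //
        (∀ i, σ i ≤ s i) ∧
        (m : ℝ) + 6 * m * Real.sqrt (Real.logb 2 m) / Real.sqrt n
          < ∑ i, ((M i (σ i)).card : ℝ)} : ℝ)
      ≤ (2 / (m : ℝ) ^ 3) * ∏ i, (((s i : ℕ) : ℝ) + 1) :=
  l1_hoeffding_truncated_bound_general n m hn hm M hM hsorted s hsle
end

section
/- Let an instance have a set N of agents and a set U of chores with identically ordered monotone normalized costs, with ordering a_1,…,a_{|U|} (lower index means higher marginal cost). Let Δ ∈ ℤ≥0 and let Q = (Q_i)_{i∈N} be a multi-allocation whose characteristic vector satisfies Σ_{a∈S} χ^Q_a ≥ |S| − Δ for every chore sequence S = {a_r, a_{r+1},…,a_s} (1 ≤ r ≤ s ≤ |U|). Then there exists a multi-allocation A' = (A'_i)_{i∈N} such that (i) c_i(A'_i) ≤ c_i(Q_i) for every agent i ∈ N, and (ii) the number of unassigned chores under A' is at most Δ. -/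
/-!
Reindex the chores along `a`, so that a lower index means a costlier chore. The hypothesis on
the prefixes `{a_0, …, a_j}` says that the copies `(i, k)` with `k ∈ Q_i`, `k ≤ j`, together
with `Δ` wildcards, outnumber the positions `≤ j`. By Hall's theorem every position `x` can then
be matched injectively to a wildcard or to a copy `(i, k)` with `k ≤ x`; position `x` goes to
agent `i`. At most `Δ` positions meet a wildcard, and the new bundle of agent `i` is prefix
dominated by `Q_i`. Prefix domination turns into a cost comparison through a chain of swaps,
each replacing a chore by a costlier one, followed by monotonicity.
-/

open Finset

section Exchange

variable {α β : Type*} [LinearOrder α]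

def PrefixDominated (T S : Finset α) : Prop :=
  ∀ j, #(T.filter (· ≤ j)) ≤ #(S.filter (· ≤ j))

theorem PrefixDominated.insert_erase {T S : Finset α} (hdom : PrefixDominated T S)
    {s t : α} (hsS : s ∈ S) (hsT : s ∉ T) (hst : s < t) (htS : t ∉ S)
    (hbelow : ∀ x ∈ T, x < t → x ∈ S) :
    PrefixDominated T (insert t (S.erase s)) := by
  intro j
  by_cases htj : t ≤ j
  · have hsj : s ∈ S.filter (· ≤ j) := mem_filter.2 ⟨hsS, hst.le.trans htj⟩
    rw [filter_insert, if_pos htj, filter_erase, card_insert_of_notMem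
      (fun h => htS (mem_filter.1 (mem_of_mem_erase h)).1), card_erase_add_one hsj]
    exact hdom j
  · refine card_le_card fun x hx => ?_
    obtain ⟨hxT, hxj⟩ := mem_filter.1 hx
    have hxS := hbelow x hxT (hxj.trans_lt (not_le.1 htj))
    exact mem_filter.2 ⟨mem_insert_of_mem (mem_erase.2 ⟨fun h => hsT (h ▸ hxT), hxS⟩), hxj⟩

theorem PrefixDominated.exists_mem_sdiff_lt {T S : Finset α} (hdom : PrefixDominated T S)
    {t : α} (htT : t ∈ T) (htS : t ∉ S) (hbelow : ∀ x ∈ T, x < t → x ∈ S) :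
    ∃ s ∈ S, s ∉ T ∧ s < t := by
  by_contra! h
  refine (hdom t).not_gt (card_lt_card ((ssubset_iff_of_subset fun x hx => ?_).2
    ⟨t, mem_filter.2 ⟨htT, le_rfl⟩, fun h' => htS (mem_filter.1 h').1⟩))
  obtain ⟨hxS, hxt⟩ := mem_filter.1 hx
  have hxt' : x < t := hxt.lt_of_ne (by rintro rfl; exact htS hxS)
  by_contra hxT
  exact (h x hxS fun h' => hxT (mem_filter.2 ⟨h', hxt⟩)).not_gt hxt'

theorem le_of_prefixDominated [Preorder β] {f : Finset α → β} (hmono : Monotone f)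
    (hswap : ∀ s t S, s < t → s ∉ S → t ∉ S → f (insert t S) ≤ f (insert s S))
    {T S : Finset α} (hdom : PrefixDominated T S) : f T ≤ f S := by
  induction hn : #(T \ S) generalizing S with
  | zero => exact hmono (sdiff_eq_empty_iff_subset.1 (card_eq_zero.1 hn))
  | succ n ih =>
    have hne : (T \ S).Nonempty := card_pos.1 (by omega)
    obtain ⟨htT, htS⟩ := mem_sdiff.1 ((T \ S).min'_mem hne)
    set t := (T \ S).min' hne
    have hbelow : ∀ x ∈ T, x < t → x ∈ S := fun x hxT hxt => by
      by_contra hxS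
      exact ((T \ S).min'_le x (mem_sdiff.2 ⟨hxT, hxS⟩)).not_gt hxt
    obtain ⟨s, hsS, hsT, hst⟩ := hdom.exists_mem_sdiff_lt htT htS hbelow
    have hsdiff : T \ insert t (S.erase s) = (T \ S).erase t := by
      rw [sdiff_insert]
      congr 1
      ext x
      simp only [mem_sdiff, mem_erase]
      grind
    calc f T ≤ f (insert t (S.erase s)) :=
          ih (hdom.insert_erase hsS hsT hst htS hbelow) (by
            rw [hsdiff, card_erase_of_mem (mem_sdiff.2 ⟨htT, htS⟩), hn]; rfl)
      _ ≤ f (insert s (S.erase s)) := hswap s t _ hst (notMem_erase s S)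
            fun h => htS (mem_of_mem_erase h)
      _ = f S := by rw [insert_erase hsS]

theorem le_of_prefixDominated_map {γ : Type*} [DecidableEq β] [Preorder γ] {c : Finset β → γ}
    (hmono : ∀ S T, S ⊆ T → c S ≤ c T) (a : α ≃ β)
    (hord : ∀ s t, s < t → ∀ S, a s ∉ S → a t ∉ S → c (insert (a t) S) ≤ c (insert (a s) S))
    {T S : Finset α} (hdom : PrefixDominated T S) :
    c (T.map a.toEmbedding) ≤ c (S.map a.toEmbedding) :=
  le_of_prefixDominated (fun _ _ h => hmono _ _ (map_subset_map.2 h))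
    (fun s t S hst hs ht => by
      simpa only [map_insert, Equiv.coe_toEmbedding] using
        hord s t hst _ (by simpa using hs) (by simpa using ht))
    hdom

end Exchange

theorem exists_prefixDominated_cover {ι α : Type*} [Fintype ι] [Fintype α] [LinearOrder α]
    (P : ι → Finset α) (Δ : ℕ)
    (hsupply : ∀ j, #(univ.filter (· ≤ j)) ≤ Δ + ∑ i, #((P i).filter (· ≤ j))) :
    ∃ B : ι → Finset α, (∀ i, PrefixDominated (B i) (P i)) ∧
      #(univ.filter fun x => ∀ i, x ∉ B i) ≤ Δ := by
  classical
  -- the admissible partners of position `x`: the `Δ` wildcards and the copies `(i, k)`, `k ≤ x`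
  let t (x : α) : Finset (Fin Δ ⊕ Σ _ : ι, α) :=
    univ.disjSum (univ.sigma fun i => (P i).filter (· ≤ x))
  have hall (s : Finset α) : #s ≤ #(s.biUnion t) := by
    rcases s.eq_empty_or_nonempty with rfl | hs
    · simp
    calc #s ≤ #(univ.filter (· ≤ s.max' hs)) :=
          card_le_card fun x hx => mem_filter.2 ⟨mem_univ x, s.le_max' x hx⟩
      _ ≤ #(t (s.max' hs)) := by simpa [t, card_disjSum, card_sigma] using hsupply _
      _ ≤ #(s.biUnion t) := card_le_card (subset_biUnion_of_mem t (s.max'_mem hs))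
  obtain ⟨g, hg, hgt⟩ := (all_card_le_biUnion_card_iff_exists_injective t).1 hall
  refine ⟨fun i => univ.filter fun x => ∃ k, g x = .inr ⟨i, k⟩, fun i j => ?_, ?_⟩
  · refine card_le_card_of_forall_subsingleton (fun x k => g x = .inr ⟨i, k⟩) ?_
      fun k _ x hx y hy => hg (hx.2.trans hy.2.symm)
    intro x hx
    obtain ⟨⟨k, hk⟩, hxj⟩ := by simpa using hx
    have hkx := hgt x
    rw [hk] at hkx
    obtain ⟨hkP, hkx⟩ := by simpa [t] using hkx
    exact ⟨k, mem_filter.2 ⟨hkP, hkx.trans hxj⟩, hk⟩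
  · refine (card_le_card_of_forall_subsingleton (fun x d => g x = .inl d) ?_
      fun d _ x hx y hy => hg (hx.2.trans hy.2.symm)).trans_eq (card_fin Δ)
    intro x hx
    rcases hgx : g x with d | ⟨i, k⟩
    · exact ⟨d, mem_univ d, rfl⟩
    · exact absurd (mem_filter.2 ⟨mem_univ x, k, hgx⟩) ((mem_filter.1 hx).2 i)

theorem copy_redistribution_chores_general
    (N u : ℕ)
    (c : Fin N → Finset (Fin u) → NNReal)
    (hmono : ∀ i, ∀ S T : Finset (Fin u), S ⊆ T → c i S ≤ c i T)
    (a : Fin u ≃ Fin u)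
    (hord : ∀ s t : Fin u, s < t → ∀ i, ∀ S : Finset (Fin u),
      a s ∉ S → a t ∉ S → c i (insert (a t) S) ≤ c i (insert (a s) S))
    (Δ : ℕ) (Q : Fin N → Finset (Fin u))
    (hQ : ∀ r s : Fin u, r ≤ s →
      ((((Finset.univ.filter (fun k : Fin u => r ≤ k ∧ k ≤ s)).image a).card : ℤ)
          - (Δ : ℤ))
        ≤ ∑ x ∈ (Finset.univ.filter (fun k : Fin u => r ≤ k ∧ k ≤ s)).image a,
            ((Finset.univ.filter (fun i => x ∈ Q i)).card : ℤ)) :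
    ∃ A' : Fin N → Finset (Fin u),
      (∀ i, c i (A' i) ≤ c i (Q i)) ∧
      (Finset.univ.filter (fun x : Fin u => ∀ i, x ∉ A' i)).card ≤ Δ := by
  let P (i : Fin N) : Finset (Fin u) := (Q i).map a.symm.toEmbedding
  have hsupply (j : Fin u) : #(univ.filter (· ≤ j)) ≤ Δ + ∑ i, #((P i).filter (· ≤ j)) := by
    have h0 (k : Fin u) : (⟨0, j.pos⟩ : Fin u) ≤ k := k.val.zero_le
    have h := hQ ⟨0, j.pos⟩ j (h0 j)
    simp only [h0, true_and, card_image_of_injective _ a.injective,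
      sum_image fun x _ y _ h => a.injective h] at h
    have hP (i : Fin N) : (P i).filter (· ≤ j) = (univ.filter (· ≤ j)).filter (a · ∈ Q i) := by
      ext x; simp [P, and_comm]
    have hswap : ∑ x with x ≤ j, #{i | a x ∈ Q i} = ∑ i, #((P i).filter (· ≤ j)) := by
      simp only [hP, card_filter]
      exact sum_comm
    rw [← hswap]
    rw [← Nat.cast_sum] at h
    omega
  obtain ⟨B, hdom, hcover⟩ := exists_prefixDominated_cover P Δ hsupply
  refine ⟨fun i => (B i).map a.toEmbedding, fun i => ?_, ?_⟩
  · simpa [P, map_map] using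
      le_of_prefixDominated_map (hmono i) a (fun s t hst => hord s t hst i) (hdom i)
  · rw [← card_map a.toEmbedding] at hcover
    convert hcover using 2
    ext x
    simp [mem_map_equiv]

/-- copy redistribution for chores: in a chores instance with agent
set `[N]`, chore set `[u]`, and identically ordered monotone normalized costs with
ordering `a` (lower index = higher marginal cost), if `Q` is a multi-allocation
such that every contiguous chore sequence `S = {a_r,…,a_s}` satisfies
`Σ_{x∈S} χ^Q_x ≥ |S| − Δ`, then there is a multi-allocation `A'` with
`c_i(A'_i) ≤ c_i(Q_i)` for every agent `i` and at most `Δ` unassigned chores. -/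
theorem copy_redistribution_chores
    (N u : ℕ)
    (c : Fin N → Finset (Fin u) → NNReal)
    (hmono : ∀ i, ∀ S T : Finset (Fin u), S ⊆ T → c i S ≤ c i T)
    (hnorm : ∀ i, c i ∅ = 0)
    (a : Fin u ≃ Fin u)
    (hord : ∀ s t : Fin u, s < t → ∀ i, ∀ S : Finset (Fin u),
      a s ∉ S → a t ∉ S → c i (insert (a t) S) ≤ c i (insert (a s) S))
    (Δ : ℕ) (Q : Fin N → Finset (Fin u))
    (hQ : ∀ r s : Fin u, r ≤ s →
      ((((Finset.univ.filter (fun k : Fin u => r ≤ k ∧ k ≤ s)).image a).card : ℤ)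
          - (Δ : ℤ))
        ≤ ∑ x ∈ (Finset.univ.filter (fun k : Fin u => r ≤ k ∧ k ≤ s)).image a,
            ((Finset.univ.filter (fun i => x ∈ Q i)).card : ℤ)) :
    ∃ A' : Fin N → Finset (Fin u),
      (∀ i, c i (A' i) ≤ c i (Q i)) ∧
      (Finset.univ.filter (fun x : Fin u => ∀ i, x ∉ A' i)).card ≤ Δ :=
  copy_redistribution_chores_general N u c hmono a hord Δ Q hQ
end

section
/- Let v : 2^[m] → ℝ≥0 be an additive valuation on m goods and let μ be its maximin share with respect to n agents, i.e., μ = max over n-partitions (X_1,…,X_n) of [m] of min_j v(X_j). Consider the duplicated ground set [m] × {1,2} and the additive valuation ṽ defined by ṽ({(g,k)}) = v({g}) for each g ∈ [m] and k ∈ {1,2}. Call a subset S ⊆ [m] × {1,2} feasible if |S ∩ {(g,1),(g,2)}| ≤ 1 for every g ∈ [m], and define the constrained maximin share μ̃ = max over n-partitions (X_1,…,X_n) of [m] × {1,2} in which every part X_j is feasible, of min_j ṽ(X_j). Then μ̃ ≥ 2·μ. -/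
/-!
Take a maximin partition `X` of `[m]` and rotate the second copies by one place: part `j` of the
duplicated instance receives the first copies of `X j` and the second copies of `X (j + 1)`.
For `n ≥ 2` the bundles `X j` and `X (j + 1)` are disjoint, so every part is feasible, and its
value `v (X j) + v (X (j + 1))` is at least `2 μ`. For `n = 1` there is no feasible partition at
all, since the single part would hold both copies of every good.
-/

open Finset

/-- A subset of the duplicated ground set `[m] × {1,2}` is feasible if it contains
at most one copy of each good. -/
def Feasible {m : ℕ} (S : Finset (Fin m × Fin 2)) : Prop :=
  ∀ g : Fin m, (S.filter (fun p => p.1 = g)).card ≤ 1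

lemma IsPartition.eq_univ_of_fin_one {α : Type*} [DecidableEq α] [Fintype α]
    {X : Fin 1 → Finset α} (hX : IsPartition X) : X 0 = univ := by
  simpa only [univ_unique, Fin.default_eq_zero, singleton_biUnion] using hX.2

lemma not_feasible_univ {m : ℕ} (g : Fin m) : ¬ Feasible (univ : Finset (Fin m × Fin 2)) :=
  fun h => (h g).not_gt <| one_lt_card.2 ⟨(g, 0), by simp, (g, 1), by simp, by simp⟩

section ShiftedDoubling

variable {α ι : Type*} [DecidableEq α]

def shiftedDoubling (X : ι → Finset α) (σ : Equiv.Perm ι) (j : ι) : Finset (α × Fin 2) :=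
  X j ×ˢ {0} ∪ X (σ j) ×ˢ {1}

lemma mem_shiftedDoubling {X : ι → Finset α} {σ : Equiv.Perm ι} {j : ι} {p : α × Fin 2} :
    p ∈ shiftedDoubling X σ j ↔ p.2 = 0 ∧ p.1 ∈ X j ∨ p.2 = 1 ∧ p.1 ∈ X (σ j) := by
  simp only [shiftedDoubling, mem_union, mem_product, mem_singleton, and_comm]

lemma IsPartition.shiftedDoubling [Fintype α] {n : ℕ} {X : Fin n → Finset α}
    (hX : IsPartition X) (σ : Equiv.Perm (Fin n)) : IsPartition (shiftedDoubling X σ) := by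
  refine ⟨fun i j hij => disjoint_left.2 fun p hi hj => ?_, eq_univ_of_forall fun p => ?_⟩
  · rw [mem_shiftedDoubling] at hi hj
    rcases hi with ⟨h0, hi⟩ | ⟨h1, hi⟩ <;> rcases hj with ⟨h0', hj⟩ | ⟨h1', hj⟩
    · exact disjoint_left.1 (hX.1 i j hij) hi hj
    · exact absurd (h0.symm.trans h1') (by decide)
    · exact absurd (h0'.symm.trans h1) (by decide)
    · exact disjoint_left.1 (hX.1 _ _ (σ.injective.ne hij)) hi hj
  · obtain ⟨i, -, hi⟩ := mem_biUnion.1 (hX.2 ▸ mem_univ p.1)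
    rw [mem_biUnion]
    obtain ⟨g, k⟩ := p
    fin_cases k
    · exact ⟨i, mem_univ _, mem_shiftedDoubling.2 (Or.inl ⟨rfl, hi⟩)⟩
    · exact ⟨σ.symm i, mem_univ _, mem_shiftedDoubling.2 (Or.inr ⟨rfl, by simpa using hi⟩)⟩

lemma feasible_shiftedDoubling {m : ℕ} {X : ι → Finset (Fin m)} {σ : Equiv.Perm ι} {j : ι}
    (hdisj : Disjoint (X j) (X (σ j))) : Feasible (shiftedDoubling X σ j) := by
  refine fun g => card_le_one.2 fun p hp q hq => ?_
  rw [mem_filter, mem_shiftedDoubling] at hp hq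
  obtain ⟨hp, rfl⟩ := hp
  obtain ⟨hq, hpq⟩ := hq
  refine Prod.ext hpq.symm ?_
  rcases hp with ⟨hp0, hp⟩ | ⟨hp1, hp⟩ <;> rcases hq with ⟨hq0, hq⟩ | ⟨hq1, hq⟩
  · exact hp0.trans hq0.symm
  · exact absurd (hpq ▸ hq) (disjoint_left.1 hdisj hp)
  · exact absurd (hpq ▸ hq) (disjoint_right.1 hdisj hp)
  · exact hp1.trans hq1.symm

lemma sum_shiftedDoubling {M : Type*} [AddCommMonoid M] (f : α → M) (X : ι → Finset α)
    (σ : Equiv.Perm ι) (j : ι) :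
    ∑ p ∈ shiftedDoubling X σ j, f p.1 = ∑ g ∈ X j, f g + ∑ g ∈ X (σ j), f g := by
  rw [shiftedDoubling, sum_union (disjoint_product.2 (Or.inr (by decide))),
    sum_product, sum_product]
  simp only [sum_singleton]

end ShiftedDoubling

/-- for an additive valuation `v` with maximin share `μ` (over `n`
agents), the maximin share `μ̃` of the duplicated instance on `[m] × {1,2}` —
computed over partitions all of whose parts are feasible, with the duplicated
additive valuation `ṽ(S) = Σ_{(g,k)∈S} v({g})` — satisfies `μ̃ ≥ 2 μ`. -/
theorem duplicated_constrained_mms_ge_two_mms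
    (n m : ℕ) (hn : 0 < n) (hm : 0 < m)
    (v : Finset (Fin m) → NNReal)
    (hadd : ∀ S : Finset (Fin m), v S = ∑ g ∈ S, v {g})
    (μ μt : NNReal)
    (hμ : IsGreatest
      {x : NNReal | ∃ X : Fin n → Finset (Fin m),
        IsPartition X ∧ x = ⨅ j, v (X j)} μ)
    (hμt : IsGreatest
      {x : NNReal | ∃ X : Fin n → Finset (Fin m × Fin 2),
        IsPartition X ∧ (∀ j, Feasible (X j)) ∧
          x = ⨅ j, ∑ p ∈ X j, v {p.1}} μt) :
    2 * μ ≤ μt := by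
  rcases eq_or_ne n 1 with rfl | hn1
  · obtain ⟨Xt, hXt, hfeas, -⟩ := hμt.1
    exact absurd (hXt.eq_univ_of_fin_one ▸ hfeas 0) (not_feasible_univ ⟨0, hm⟩)
  have : Nonempty (Fin n) := ⟨⟨0, hn⟩⟩
  set σ := finRotate n
  have hσ (j : Fin n) : σ j ≠ j :=
    Equiv.Perm.mem_support.1 (support_finRotate_of_le (n := n) (by omega) ▸ mem_univ j)
  obtain ⟨X, hX, rfl⟩ := hμ.1
  refine le_trans ?_ (hμt.2 ⟨shiftedDoubling X σ, hX.shiftedDoubling σ,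
    fun j => feasible_shiftedDoubling (hX.1 _ _ (hσ j).symm), rfl⟩)
  refine le_ciInf fun j => ?_
  rw [sum_shiftedDoubling (fun g => v {g}), ← hadd, ← hadd, two_mul]
  exact add_le_add (ciInf_le (OrderBot.bddBelow _) j) (ciInf_le (OrderBot.bddBelow _) (σ j))
end
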